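/- For every argumentation framework F, every istgt-extension (tf-stg2-extension) of F is a naive extension of F; consequently, the istgt semantics satisfies I-maximality: if S₁ and S₂ are istgt-extensions of F with S₁ ⊆ S₂, then S₁ = S₂. -/

import Mathlib

/-!
Basic notions of abstract argumentation frameworks, following
Andrews–San Mauro, "SCC-recursiveness in infinite argumentation".
-/

universe u

/-- An argumentation framework: a set `A` of arguments together with an
attack relation `R ⊆ A × A`. -/
structure AF (α : Type u) where
  A : Set α
  R : α → α → Prop
  attack_mem : ∀ ⦃a b : α⦄, R a b → a ∈ A ∧ b ∈ A

namespace AF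

variable {α : Type u}

/-- The restriction `F↾U = (A ∩ U, R ∩ (U × U))`. -/
def restrict (F : AF α) (U : Set α) : AF α where
  A := F.A ∩ U
  R a b := F.R a b ∧ a ∈ U ∧ b ∈ U
  attack_mem := by
    intro a b h
    exact ⟨⟨(F.attack_mem h.1).1, h.2.1⟩, ⟨(F.attack_mem h.1).2, h.2.2⟩⟩

/-- `S` is conflict-free: `S ⊆ A` and no argument of `S` attacks another. -/
def ConflictFree (F : AF α) (S : Set α) : Prop :=
  S ⊆ F.A ∧ ∀ a ∈ S, ∀ b ∈ S, ¬ F.R a b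

/-- `S` is a naive extension: conflict-free and ⊆-maximal among conflict-free sets. -/
def Naive (F : AF α) (S : Set α) : Prop :=
  ConflictFree F S ∧ ∀ T, ConflictFree F T → S ⊆ T → S = T

/-- `S⁺`: the set of arguments attacked by `S`. -/
def plus (F : AF α) (S : Set α) : Set α := {x | ∃ y ∈ S, F.R y x}

/-- The range `S⊕ = S ∪ S⁺`. -/
def rng (F : AF α) (S : Set α) : Set α := S ∪ plus F S

/-- `S` is a stage extension: conflict-free with ⊆-maximal range among
conflict-free sets. -/
def Stage (F : AF α) (S : Set α) : Prop :=
  ConflictFree F S ∧ ¬ ∃ T, ConflictFree F T ∧ rng F S ⊂ rng F T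

/-- `F` is finitary: every argument has finitely many attackers. -/
def Finitary (F : AF α) : Prop := ∀ a, {x | F.R x a}.Finite

/-- There is a directed path from `a` to `b` in `F` (both being arguments of `F`). -/
def Reach (F : AF α) (a b : α) : Prop :=
  a ∈ F.A ∧ b ∈ F.A ∧ Relation.ReflTransGen F.R a b

/-- The strongly connected component of `a` in `F`. -/
def SCCof (F : AF α) (a : α) : Set α := {b | Reach F a b ∧ Reach F b a}

/-- `X` is a strongly connected component of `F`. -/
def IsSCC (F : AF α) (X : Set α) : Prop := ∃ a ∈ F.A, X = SCCof F a

/-- `D_S(X)`: the elements of `X` attacked by an element of `S` outside `X`. -/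
def Dset (F : AF α) (S X : Set α) : Set α := {b ∈ X | ∃ a ∈ S \ X, F.R a b}

/-- `S` is a cf1.5-extension of `F`. -/
def CF15 (F : AF α) (S : Set α) : Prop :=
  ConflictFree F S ∧
    ∀ X, IsSCC F X → Naive (F.restrict (X \ Dset F S X)) (S ∩ X)

/-- `S` is a stg1.5-extension of `F`. -/
def STG15 (F : AF α) (S : Set α) : Prop :=
  ConflictFree F S ∧
    ∀ X, IsSCC F X → Stage (F.restrict (X \ Dset F S X)) (S ∩ X)

/-- `C_S^α(a)`, defined by transfinite recursion. -/
noncomputable def Cseq (F : AF α) (S : Set α) (a : α) (o : Ordinal.{0}) : Set α :=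
  Ordinal.limitRecOn o (SCCof F a)
    (fun _ C => SCCof (F.restrict (C \ Dset F S C)) a)
    (fun o' _ ih => SCCof (F.restrict (⋂ β : {β : Ordinal.{0} // β < o'}, ih β.1 β.2)) a)

/-- The component ordinal `α_S(a)`: the least `α` with `a ∉ C_S^α(a)` or
`C_S^{α+1}(a) = C_S^α(a)`. -/
noncomputable def alphaS (F : AF α) (S : Set α) (a : α) : Ordinal.{0} :=
  sInf {o | a ∉ Cseq F S a o ∨ Cseq F S a (o + 1) = Cseq F S a o}

/-- `S` is an icft-extension (tfcf2-extension) of `F`. -/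
def ICFT (F : AF α) (S : Set α) : Prop :=
  ConflictFree F S ∧ ∀ a ∈ F.A,
    a ∉ Cseq F S a (alphaS F S a) ∨
      Naive (F.restrict (Cseq F S a (alphaS F S a))) (S ∩ Cseq F S a (alphaS F S a))

/-- `S` is an istgt-extension (tf-stg2-extension) of `F`. -/
def ISTGT (F : AF α) (S : Set α) : Prop :=
  ConflictFree F S ∧ ∀ a ∈ F.A,
    a ∉ Cseq F S a (alphaS F S a) ∨
      Stage (F.restrict (Cseq F S a (alphaS F S a))) (S ∩ Cseq F S a (alphaS F S a))

/-- The characteristic function `f_F`. -/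
def charF (F : AF α) (S : Set α) : Set α :=
  {x ∈ F.A | ∀ y, F.R y x → ∃ z ∈ S, F.R z y}

/-- `G` is the grounded extension of `F`: the least fixed point of `f_F`. -/
def IsGrounded (F : AF α) (G : Set α) : Prop :=
  charF F G = G ∧ ∀ T, charF F T = T → G ⊆ T

/-- `conf(F)`: the set of conflicting pairs of `F`. -/
def confl (F : AF α) : Set (α × α) := {p | F.R p.1 p.2 ∨ F.R p.2 p.1}

/-- The operator `Δ_{F,S}(D)`. -/
def DeltaOp (F : AF α) (S D : Set α) : Set α :=
  {a ∈ F.A | ∃ b ∈ S, F.R b a ∧ ¬ Reach (F.restrict (F.A \ D)) a b}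

/-- `Δ^α_{F,S}`, defined by transfinite recursion. -/
noncomputable def Deltaseq (F : AF α) (S : Set α) (o : Ordinal.{0}) : Set α :=
  Ordinal.limitRecOn o (∅ : Set α)
    (fun _ D => DeltaOp F S D)
    (fun o' _ ih => ⋃ β : {β : Ordinal.{0} // β < o'}, ih β.1 β.2)

/-- The least fixed point `Δ_{F,S}` of the monotone operator `Δ_{F,S}(·)`,
given by Knaster–Tarski as the intersection of all prefixed points. -/
def DeltaFix (F : AF α) (S : Set α) : Set α :=
  ⋂₀ {D | DeltaOp F S D ⊆ D}

end AF

/-!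
If `S` is an istgt-extension and `T ⊇ S` is conflict-free, take `a ∈ T`. No member of `S`
attacks `a`, so `a` is never removed by the sets `D_S` and lies in every `C_S^α(a)`, in
particular in `C = C_S^{α_S(a)}(a)`. Were `a ∉ S`, the set `(S ∩ C) ∪ {a}` would be
conflict-free in `F↾C` with range strictly larger than that of `S ∩ C` (as `a` is neither in
`S` nor attacked by it), contradicting that `S ∩ C` is a stage extension of `F↾C`.
Hence `S` is naive, and I-maximality follows because naive extensions are ⊆-maximal.
-/

namespace AF

variable {α : Type u} {F : AF α}

lemma mem_SCCof_self {a : α} (ha : a ∈ F.A) : a ∈ SCCof F a :=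
  ⟨⟨ha, ha, .refl⟩, ⟨ha, ha, .refl⟩⟩

lemma mem_Cseq_of_not_attacked (S : Set α) {a : α} (ha : a ∈ F.A)
    (h : ∀ s ∈ S, ¬ F.R s a) (o : Ordinal.{0}) : a ∈ Cseq F S a o := by
  induction o using Ordinal.limitRecOn with
  | zero =>
    rw [Cseq, Ordinal.limitRecOn_zero]
    exact mem_SCCof_self ha
  | add_one o ih =>
    rw [Cseq, Ordinal.limitRecOn_add_one]
    refine mem_SCCof_self ⟨ha, ih, ?_⟩
    rintro ⟨-, s, ⟨hs, -⟩, hsa⟩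
    exact h s hs hsa
  | limit o hlim ih =>
    rw [Cseq, Ordinal.limitRecOn_limit _ _ _ _ hlim]
    exact mem_SCCof_self ⟨ha, Set.mem_iInter.2 fun β => ih β.1 β.2⟩

lemma ConflictFree.mono {S T : Set α} (hT : ConflictFree F T) (hST : S ⊆ T) :
    ConflictFree F S :=
  ⟨hST.trans hT.1, fun a ha b hb => hT.2 a (hST ha) b (hST hb)⟩

lemma ConflictFree.restrict {S : Set α} (hS : ConflictFree F S) (U : Set α) :
    ConflictFree (F.restrict U) (S ∩ U) :=
  ⟨fun _ hx => ⟨hS.1 hx.1, hx.2⟩, fun a ha b hb hab => hS.2 a ha.1 b hb.1 hab.1⟩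

lemma rng_mono {S T : Set α} (hST : S ⊆ T) : rng F S ⊆ rng F T :=
  Set.union_subset_union hST fun _ ⟨y, hy, hyx⟩ => ⟨y, hST hy, hyx⟩

lemma Stage.mem_rng_of_conflictFree_insert {S : Set α} {a : α} (hS : Stage F S)
    (ha : ConflictFree F (insert a S)) : a ∈ rng F S := by
  by_contra h
  exact hS.2 ⟨insert a S, ha, (Set.ssubset_iff_of_subset (rng_mono (Set.subset_insert a S))).2
    ⟨a, Or.inl (Set.mem_insert a S), h⟩⟩

lemma ISTGT.naive {S : Set α} (hS : ISTGT F S) : Naive F S := by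
  refine ⟨hS.1, fun T hT hST => hST.antisymm fun a haT => ?_⟩
  by_contra haS
  have haA : a ∈ F.A := hT.1 haT
  have hunattacked : ∀ s ∈ S, ¬ F.R s a := fun s hs => hT.2 s (hST hs) a haT
  have haC := mem_Cseq_of_not_attacked S haA hunattacked (alphaS F S a)
  set C := Cseq F S a (alphaS F S a)
  have hstage : Stage (F.restrict C) (S ∩ C) := (hS.2 a haA).resolve_left (not_not.2 haC)
  have hcf : ConflictFree (F.restrict C) (insert a (S ∩ C)) := by
    rw [← Set.insert_inter_of_mem haC]
    exact (hT.mono (Set.insert_subset haT hST)).restrict C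
  rcases hstage.mem_rng_of_conflictFree_insert hcf with ⟨haS', -⟩ | ⟨s, ⟨hs, -⟩, hsa⟩
  · exact haS haS'
  · exact hunattacked s hs hsa.1

end AF

/-- every istgt-extension is naive; hence istgt satisfies
I-maximality. -/
theorem statement10 {α : Type u} (F : AF α) :
    (∀ S, AF.ISTGT F S → AF.Naive F S) ∧
      ∀ S₁ S₂, AF.ISTGT F S₁ → AF.ISTGT F S₂ → S₁ ⊆ S₂ → S₁ = S₂ :=
  ⟨fun _ hS => hS.naive, fun _ _ h₁ h₂ hsub => h₁.naive.2 _ h₂.1 hsub⟩
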